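/- arXiv:2510.24815 — 5 statements merged into one kernel-verified Lean document; each statement's English description precedes it below -/
import Mathlib

section
/- Let ν: [0,1]² → ℝ be defined by ν(x) = g(x₁) + h(x₂) where g, h are square-integrable functions, and let X = (X₁, X₂) be a random vector on [0,1]² with density bounded between positive constants. If {ν^{(∅)}, ν^{(1)}, ν^{(2)}, ν^{(1,2)}} is the Hoeffding decomposition of ν(X) (the unique decomposition satisfying E[ν^{(J)}(X^{(J)}) | X^{(I)}] = 0 for all proper subsets I ⊊ J), then the interaction component ν^{(1,2)}(X₁, X₂) = 0 almost surely. -/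
/-! Solving the decomposition for the interaction term writes `Z = ν₁₂(X)` almost surely as
`U(X₁) + V(X₂)` with `U, V` square-integrable. A vanishing conditional expectation given `X₁`
makes `Z` orthogonal in `L²` to every square-integrable function of `X₁`, and likewise for `X₂`,
so `E[Z²] = E[Z U(X₁)] + E[Z V(X₂)] = 0`. -/

open MeasureTheory

theorem integral_mul_eq_zero_of_condExp_eq_zero {Ω : Type*} {m m₀ : MeasurableSpace Ω}
    {μ : Measure Ω} [IsFiniteMeasure μ] (hm : m ≤ m₀) {Y Z : Ω → ℝ}
    (hY : StronglyMeasurable[m] Y) (hYZ : Integrable (Y * Z) μ) (hZ : Integrable Z μ)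
    (hZm : μ[Z | m] =ᵐ[μ] 0) :
    ∫ ω, (Y * Z) ω ∂μ = 0 := by
  have hcond : μ[Y * Z | m] =ᵐ[μ] 0 := by
    filter_upwards [condExp_mul_of_stronglyMeasurable_left hY hYZ hZ, hZm] with ω h₁ h₂
    simp [h₁, h₂]
  rw [← integral_condExp hm, integral_congr_ae hcond, Pi.zero_def, integral_zero]

theorem ae_eq_zero_of_condExp_eq_zero_of_ae_eq_add {Ω : Type*} {m₁ m₂ m₀ : MeasurableSpace Ω}
    {μ : Measure Ω} [IsFiniteMeasure μ] (hm₁ : m₁ ≤ m₀) (hm₂ : m₂ ≤ m₀) {Z U V : Ω → ℝ}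
    (hZ : MemLp Z 2 μ) (hU : MemLp U 2 μ) (hV : MemLp V 2 μ)
    (hUm : StronglyMeasurable[m₁] U) (hVm : StronglyMeasurable[m₂] V)
    (hZ₁ : μ[Z | m₁] =ᵐ[μ] 0) (hZ₂ : μ[Z | m₂] =ᵐ[μ] 0) (hZUV : Z =ᵐ[μ] U + V) :
    Z =ᵐ[μ] 0 := by
  have hZi : Integrable Z μ := hZ.integrable (by norm_num)
  have hUZ : Integrable (U * Z) μ := hU.integrable_mul hZ
  have hVZ : Integrable (V * Z) μ := hV.integrable_mul hZ
  have hZZ : ∫ ω, (Z * Z) ω ∂μ = 0 := by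
    calc ∫ ω, (Z * Z) ω ∂μ = ∫ ω, (U * Z) ω + (V * Z) ω ∂μ := by
          refine integral_congr_ae ?_
          filter_upwards [hZUV] with ω hω
          simp only [Pi.mul_apply, hω, Pi.add_apply]
          ring
      _ = 0 := by
        rw [integral_add hUZ hVZ, integral_mul_eq_zero_of_condExp_eq_zero hm₁ hUm hUZ hZi hZ₁,
          integral_mul_eq_zero_of_condExp_eq_zero hm₂ hVm hVZ hZi hZ₂, add_zero]
  have hZZ0 : Z * Z =ᵐ[μ] 0 :=
    (integral_eq_zero_iff_of_nonneg (fun ω => mul_self_nonneg (Z ω))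
      (hZ.integrable_mul hZ)).mp hZZ
  filter_upwards [hZZ0] with ω hω
  exact mul_self_eq_zero.mp hω

theorem stmt6_general {Ω : Type*} [MeasurableSpace Ω] (P : Measure Ω) [IsProbabilityMeasure P]
    (X : Ω → ℝ × ℝ) (hX : Measurable X)
    (g h : ℝ → ℝ) (hgm : Measurable g) (hhm : Measurable h)
    (hgL2 : MemLp (fun ω => g (X ω).1) 2 P) (hhL2 : MemLp (fun ω => h (X ω).2) 2 P)
    (ν₀ : ℝ) (ν₁ ν₂ : ℝ → ℝ) (ν₁₂ : ℝ × ℝ → ℝ)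
    (hν₁m : Measurable ν₁) (hν₂m : Measurable ν₂)
    (hν₁L2 : MemLp (fun ω => ν₁ (X ω).1) 2 P)
    (hν₂L2 : MemLp (fun ω => ν₂ (X ω).2) 2 P)
    (hν₁₂L2 : MemLp (fun ω => ν₁₂ (X ω)) 2 P)
    (hdecomp : ∀ᵐ ω ∂P,
      g (X ω).1 + h (X ω).2 = ν₀ + ν₁ (X ω).1 + ν₂ (X ω).2 + ν₁₂ (X ω))
    (hν₁₂c1 : P[(fun ω => ν₁₂ (X ω)) |
        MeasurableSpace.comap (fun ω => (X ω).1) inferInstance] =ᵐ[P] 0)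
    (hν₁₂c2 : P[(fun ω => ν₁₂ (X ω)) |
        MeasurableSpace.comap (fun ω => (X ω).2) inferInstance] =ᵐ[P] 0) :
    (fun ω => ν₁₂ (X ω)) =ᵐ[P] 0 := by
  refine ae_eq_zero_of_condExp_eq_zero_of_ae_eq_add hX.fst.comap_le hX.snd.comap_le hν₁₂L2
    (U := fun ω => g (X ω).1 - ν₁ (X ω).1 - ν₀) (V := fun ω => h (X ω).2 - ν₂ (X ω).2)
    ((hgL2.sub hν₁L2).sub (memLp_const ν₀)) (hhL2.sub hν₂L2)
    ((((hgm.sub hν₁m).comp (comap_measurable _)).sub_const ν₀).stronglyMeasurable)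
    (((hhm.sub hν₂m).comp (comap_measurable _)).stronglyMeasurable) hν₁₂c1 hν₁₂c2 ?_
  filter_upwards [hdecomp] with ω hω
  simp only [Pi.add_apply]
  linarith

/-- If ν(x) = g(x₁) + h(x₂) and X has a density on [0,1]² bounded between
positive constants, then the interaction component ν^{(1,2)} of the (generalized) Hoeffding
decomposition of ν(X) vanishes almost surely. -/
theorem stmt6 {Ω : Type*} [MeasurableSpace Ω] (P : Measure Ω) [IsProbabilityMeasure P]
    (X : Ω → ℝ × ℝ) (hX : Measurable X)
    (f : ℝ × ℝ → ℝ) (c₁ c₂ : ℝ) (hc₁ : 0 < c₁) (hc₁₂ : c₁ ≤ c₂)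
    (hdens : Measure.map X P =
      (volume : Measure (ℝ × ℝ)).withDensity (fun x => ENNReal.ofReal (f x)))
    (hfb : ∀ x ∈ Set.Icc ((0 : ℝ), (0 : ℝ)) (1, 1), c₁ ≤ f x ∧ f x ≤ c₂)
    (hfout : ∀ x ∉ Set.Icc ((0 : ℝ), (0 : ℝ)) (1, 1), f x = 0)
    (g h : ℝ → ℝ) (hgm : Measurable g) (hhm : Measurable h)
    (hgL2 : MemLp (fun ω => g (X ω).1) 2 P) (hhL2 : MemLp (fun ω => h (X ω).2) 2 P)
    (ν₀ : ℝ) (ν₁ ν₂ : ℝ → ℝ) (ν₁₂ : ℝ × ℝ → ℝ)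
    (hν₁m : Measurable ν₁) (hν₂m : Measurable ν₂) (hν₁₂m : Measurable ν₁₂)
    (hν₁L2 : MemLp (fun ω => ν₁ (X ω).1) 2 P)
    (hν₂L2 : MemLp (fun ω => ν₂ (X ω).2) 2 P)
    (hν₁₂L2 : MemLp (fun ω => ν₁₂ (X ω)) 2 P)
    (hdecomp : ∀ᵐ ω ∂P,
      g (X ω).1 + h (X ω).2 = ν₀ + ν₁ (X ω).1 + ν₂ (X ω).2 + ν₁₂ (X ω))
    (hν₁mean : ∫ ω, ν₁ (X ω).1 ∂P = 0)
    (hν₂mean : ∫ ω, ν₂ (X ω).2 ∂P = 0)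
    (hν₁₂mean : ∫ ω, ν₁₂ (X ω) ∂P = 0)
    (hν₁₂c1 : P[(fun ω => ν₁₂ (X ω)) |
        MeasurableSpace.comap (fun ω => (X ω).1) inferInstance] =ᵐ[P] 0)
    (hν₁₂c2 : P[(fun ω => ν₁₂ (X ω)) |
        MeasurableSpace.comap (fun ω => (X ω).2) inferInstance] =ᵐ[P] 0) :
    (fun ω => ν₁₂ (X ω)) =ᵐ[P] 0 :=
  stmt6_general P X hX g h hgm hhm hgL2 hhL2 ν₀ ν₁ ν₂ ν₁₂ hν₁m hν₂m hν₁L2 hν₂L2 hν₁₂L2 hdecomp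
    hν₁₂c1 hν₁₂c2
end

section
/- Let X = (X₁, X₂) be a centered bivariate Gaussian vector with unit variances and correlation ρ ∈ (−1, 1). Define η^{(1)}(x) = (ρ/(1+ρ²))(x² − 1), η^{(2)}(x) = (ρ/(1+ρ²))(x² − 1), and η^{(1,2)}(x,z) = ρ(1−ρ²)/(1+ρ²) − (ρ/(1+ρ²))(x² + z²) + x·z, and η^{(∅)} = ρ. Then X₁·X₂ = η^{(∅)} + η^{(1)}(X₁) + η^{(2)}(X₂) + η^{(1,2)}(X₁, X₂) almost surely, and E[η^{(1,2)}(X₁,X₂) | X₁] = 0, E[η^{(1,2)}(X₁,X₂) | X₂] = 0, E[η^{(1)}(X₁)] = E[η^{(2)}(X₂)] = 0. -/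
open MeasureTheory ProbabilityTheory

/-!
Writing `X₂ = ρ X₁ + s Z` with `s = √(1 - ρ²)` and `Z` a standard Gaussian independent of `X₁`,
and using `s² = 1 - ρ²`, the interaction term becomes `c₁ X₁ Z + c₂ (1 - Z²)`. Both summands have
zero conditional expectation given `X₁`, since `E Z = 0` and `E Z² = 1`. The same argument applies
with the roles of `X₁` and `X₂` exchanged, because `η^{(1,2)}` is symmetric and the rotation
`W = s Z₁ - ρ Z₂` of the independent Gaussians `Z₁, Z₂` is a standard Gaussian independent of `X₂`
with `X₁ = ρ X₂ + s W`.
-/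

section

variable {Ω : Type*} [MeasurableSpace Ω] {P : Measure Ω}

lemma ProbabilityTheory.HasLaw.integral_sq_of_gaussianReal_zero {V : Ω → ℝ} {v : NNReal}
    (hV : HasLaw V (gaussianReal 0 v) P) : ∫ ω, V ω ^ 2 ∂P = v := by
  rw [← variance_of_integral_eq_zero hV.aemeasurable
      (by rw [hV.integral_eq, integral_id_gaussianReal]),
    hV.variance_eq, variance_id_gaussianReal]

lemma hasLaw_add_of_indepFun_gaussianReal_zero_one {Z₁ Z₂ : Ω → ℝ}
    (h₁ : HasLaw Z₁ (gaussianReal 0 1) P) (h₂ : HasLaw Z₂ (gaussianReal 0 1) P)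
    (hind : IndepFun Z₁ Z₂ P) {a b : ℝ} (hab : a ^ 2 + b ^ 2 = 1) :
    HasLaw (fun ω => a * Z₁ ω + b * Z₂ ω) (gaussianReal 0 1) P := by
  refine ⟨by fun_prop, ?_⟩
  have := gaussianReal_add_gaussianReal_of_indepFun
    (hind.comp (measurable_const_mul a) (measurable_const_mul b))
    (gaussianReal_const_mul h₁ a).map_eq (gaussianReal_const_mul h₂ b).map_eq
  convert this using 2
  · rfl
  · simp
  · ext; simp [hab]

lemma indepFun_rotation_of_hasGaussianLaw [IsProbabilityMeasure P] {Z₁ Z₂ : Ω → ℝ}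
    (h₁ : HasGaussianLaw Z₁ P) (h₂ : HasGaussianLaw Z₂ P) (hind : IndepFun Z₁ Z₂ P)
    (hvar : Var[Z₁; P] = Var[Z₂; P]) (a b : ℝ) :
    IndepFun (fun ω => a * Z₁ ω + b * Z₂ ω) (fun ω => b * Z₁ ω - a * Z₂ ω) P := by
  let L : ℝ × ℝ →L[ℝ] ℝ × ℝ :=
    (a • ContinuousLinearMap.fst ℝ ℝ ℝ + b • ContinuousLinearMap.snd ℝ ℝ ℝ).prod
      (b • ContinuousLinearMap.fst ℝ ℝ ℝ - a • ContinuousLinearMap.snd ℝ ℝ ℝ)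
  have hrot : HasGaussianLaw (fun ω => (a * Z₁ ω + b * Z₂ ω, b * Z₁ ω - a * Z₂ ω)) P :=
    (hind.hasGaussianLaw h₁ h₂).map_fun L
  refine hrot.indepFun_of_covariance_eq_zero ?_
  have m₁ := h₁.memLp_two
  have m₂ := h₂.memLp_two
  change cov[a • Z₁ + b • Z₂, b • Z₁ - a • Z₂; P] = 0
  rw [covariance_add_left (m₁.const_smul a) (m₂.const_smul b)
      ((m₁.const_smul b).sub (m₂.const_smul a)),
    covariance_sub_right (m₁.const_smul a) (m₁.const_smul b) (m₂.const_smul a),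
    covariance_sub_right (m₂.const_smul b) (m₁.const_smul b) (m₂.const_smul a)]
  simp only [covariance_smul_left, covariance_smul_right]
  rw [covariance_comm Z₂ Z₁, hind.covariance_eq_zero m₁ m₂, covariance_self h₁.aemeasurable,
    covariance_self h₂.aemeasurable, hvar]
  ring

lemma condExp_mul_add_const_mul_one_sub_sq_eq_zero [IsProbabilityMeasure P] {Y V : Ω → ℝ}
    (hY : Measurable Y) (hV : Measurable V) (hYV : IndepFun Y V P) (hYi : Integrable Y P)
    (hV2 : MemLp V 2 P) (hmean : P[V] = 0) (hsq : ∫ ω, V ω ^ 2 ∂P = 1) (a b : ℝ) :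
    P[fun ω => a * (Y ω * V ω) + b * (1 - V ω ^ 2) | MeasurableSpace.comap Y inferInstance]
      =ᵐ[P] 0 := by
  have hVi : Integrable V P := hV2.integrable one_le_two
  have hV2i : Integrable (fun ω => V ω ^ 2) P := hV2.integrable_sq
  have hYVi : Integrable (Y * V) P := hYV.integrable_mul hYi hVi
  have h1V2i : Integrable (fun ω => 1 - V ω ^ 2) P := (integrable_const 1).sub hV2i
  have hprod : P[Y * V | MeasurableSpace.comap Y inferInstance] =ᵐ[P] Y * fun _ => P[V] :=
    (condExp_mul_of_stronglyMeasurable_left (comap_measurable Y).stronglyMeasurable hYVi hVi).trans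
      (condExp_indep_eq hV.comap_le hY.comap_le (comap_measurable V).stronglyMeasurable
        hYV.symm).mul_left
  have hsq' : P[fun ω => 1 - V ω ^ 2 | MeasurableSpace.comap Y inferInstance]
      =ᵐ[P] fun _ => ∫ ω, (1 - V ω ^ 2) ∂P :=
    condExp_indep_eq hV.comap_le hY.comap_le
      (measurable_const.sub ((comap_measurable V).pow_const 2)).stronglyMeasurable hYV.symm
  have hsqi : ∫ ω, (1 - V ω ^ 2) ∂P = 0 := by
    rw [integral_sub (integrable_const 1) hV2i, hsq]; simp
  change P[a • (Y * V) + b • (fun ω => 1 - V ω ^ 2) | _] =ᵐ[P] 0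
  filter_upwards [condExp_add (m := MeasurableSpace.comap Y inferInstance)
      (hYVi.smul a) (h1V2i.smul b),
    condExp_smul (μ := P) (m := MeasurableSpace.comap Y inferInstance) a (Y * V),
    condExp_smul (μ := P) (m := MeasurableSpace.comap Y inferInstance) b (fun ω => 1 - V ω ^ 2),
    hprod, hsq'] with ω hadd hsa hsb hprodω hsqω
  rw [hadd, Pi.add_apply, hsa, hsb]
  simp [hprodω, hsqω, hmean, hsqi]

variable (ρ : ℝ)

noncomputable def hoeffdingMainEffect (x : ℝ) : ℝ := ρ / (1 + ρ ^ 2) * (x ^ 2 - 1)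

noncomputable def hoeffdingInteraction (x z : ℝ) : ℝ :=
  ρ * (1 - ρ ^ 2) / (1 + ρ ^ 2) - ρ / (1 + ρ ^ 2) * (x ^ 2 + z ^ 2) + x * z

lemma hoeffdingInteraction_comm (x z : ℝ) :
    hoeffdingInteraction ρ x z = hoeffdingInteraction ρ z x := by
  unfold hoeffdingInteraction; ring

lemma mul_eq_hoeffding_decomposition (x z : ℝ) :
    x * z = ρ + hoeffdingMainEffect ρ x + hoeffdingMainEffect ρ z + hoeffdingInteraction ρ x z := by
  unfold hoeffdingMainEffect hoeffdingInteraction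
  field_simp
  ring

lemma hoeffdingInteraction_mul_add_mul {s : ℝ} (hs : s ^ 2 = 1 - ρ ^ 2) (x z : ℝ) :
    hoeffdingInteraction ρ x (ρ * x + s * z)
      = s * (1 - ρ ^ 2) / (1 + ρ ^ 2) * (x * z) + ρ * (1 - ρ ^ 2) / (1 + ρ ^ 2) * (1 - z ^ 2) := by
  unfold hoeffdingInteraction
  field_simp
  linear_combination (-ρ * z ^ 2) * hs

lemma integral_hoeffdingMainEffect {X : Ω → ℝ} (hX : HasLaw X (gaussianReal 0 1) P) :
    ∫ ω, hoeffdingMainEffect ρ (X ω) ∂P = 0 := by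
  have := hX.isProbabilityMeasure
  unfold hoeffdingMainEffect
  rw [integral_const_mul, integral_sub hX.hasGaussianLaw.memLp_two.integrable_sq
    (integrable_const 1), hX.integral_sq_of_gaussianReal_zero]
  simp

lemma condExp_hoeffdingInteraction_eq_zero [IsProbabilityMeasure P] {Y V : Ω → ℝ}
    (hY : Measurable Y) (hV : Measurable V) (hYi : Integrable Y P)
    (hVlaw : HasLaw V (gaussianReal 0 1) P) (hYV : IndepFun Y V P) {s : ℝ}
    (hs : s ^ 2 = 1 - ρ ^ 2) :
    P[fun ω => hoeffdingInteraction ρ (Y ω) (ρ * Y ω + s * V ω) |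
      MeasurableSpace.comap Y inferInstance] =ᵐ[P] 0 := by
  simp only [hoeffdingInteraction_mul_add_mul ρ hs]
  exact condExp_mul_add_const_mul_one_sub_sq_eq_zero hY hV hYV hYi hVlaw.hasGaussianLaw.memLp_two
    (by rw [hVlaw.integral_eq, integral_id_gaussianReal]) hVlaw.integral_sq_of_gaussianReal_zero _ _

end

/-- Analytical Hoeffding decomposition of X₁·X₂ for a centered bivariate
Gaussian with unit variances and correlation ρ (represented as X₁ = Z₁,
X₂ = ρZ₁ + √(1−ρ²)Z₂ with Z₁, Z₂ independent standard Gaussians). -/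
theorem stmt9 {Ω : Type*} [MeasurableSpace Ω] (P : Measure Ω) [IsProbabilityMeasure P]
    (ρ : ℝ) (hρ : ρ ∈ Set.Ioo (-1 : ℝ) 1)
    (Z₁ Z₂ : Ω → ℝ) (hZ₁ : Measurable Z₁) (hZ₂ : Measurable Z₂)
    (hlaw₁ : Measure.map Z₁ P = gaussianReal 0 1)
    (hlaw₂ : Measure.map Z₂ P = gaussianReal 0 1)
    (hindep : IndepFun Z₁ Z₂ P)
    (X₁ X₂ : Ω → ℝ)
    (hX₁ : X₁ = Z₁)
    (hX₂ : X₂ = fun ω => ρ * Z₁ ω + Real.sqrt (1 - ρ ^ 2) * Z₂ ω)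
    (η₁ η₂ : ℝ → ℝ) (η₁₂ : ℝ → ℝ → ℝ) (η₀ : ℝ)
    (hη₀ : η₀ = ρ)
    (hη₁ : η₁ = fun x => (ρ / (1 + ρ ^ 2)) * (x ^ 2 - 1))
    (hη₂ : η₂ = fun x => (ρ / (1 + ρ ^ 2)) * (x ^ 2 - 1))
    (hη₁₂ : η₁₂ = fun x z =>
      ρ * (1 - ρ ^ 2) / (1 + ρ ^ 2) - (ρ / (1 + ρ ^ 2)) * (x ^ 2 + z ^ 2) + x * z) :
    (∀ᵐ ω ∂P, X₁ ω * X₂ ω = η₀ + η₁ (X₁ ω) + η₂ (X₂ ω) + η₁₂ (X₁ ω) (X₂ ω)) ∧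
      P[(fun ω => η₁₂ (X₁ ω) (X₂ ω)) |
          MeasurableSpace.comap X₁ inferInstance] =ᵐ[P] 0 ∧
      P[(fun ω => η₁₂ (X₁ ω) (X₂ ω)) |
          MeasurableSpace.comap X₂ inferInstance] =ᵐ[P] 0 ∧
      ∫ ω, η₁ (X₁ ω) ∂P = 0 ∧
      ∫ ω, η₂ (X₂ ω) ∂P = 0 := by
  subst η₀
  obtain rfl : η₁ = hoeffdingMainEffect ρ := hη₁
  obtain rfl : η₂ = hoeffdingMainEffect ρ := hη₂
  obtain rfl : η₁₂ = hoeffdingInteraction ρ := hη₁₂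
  subst X₁
  set s := √(1 - ρ ^ 2)
  have hs : s ^ 2 = 1 - ρ ^ 2 := Real.sq_sqrt (by nlinarith [hρ.1, hρ.2])
  have hρs : ρ ^ 2 + s ^ 2 = 1 := by rw [hs]; ring
  have hlawZ₁ : HasLaw Z₁ (gaussianReal 0 1) P := ⟨hZ₁.aemeasurable, hlaw₁⟩
  have hlawZ₂ : HasLaw Z₂ (gaussianReal 0 1) P := ⟨hZ₂.aemeasurable, hlaw₂⟩
  set W := fun ω => s * Z₁ ω - ρ * Z₂ ω
  have hlawX₂ : HasLaw X₂ (gaussianReal 0 1) P :=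
    hX₂ ▸ hasLaw_add_of_indepFun_gaussianReal_zero_one hlawZ₁ hlawZ₂ hindep hρs
  have hlawW : HasLaw W (gaussianReal 0 1) P := by
    simpa [W, sub_eq_add_neg] using
      hasLaw_add_of_indepFun_gaussianReal_zero_one hlawZ₁ hlawZ₂ hindep (a := s) (b := -ρ)
        (by rw [neg_sq, add_comm, hρs])
  have hX₂W : IndepFun X₂ W P :=
    hX₂ ▸ indepFun_rotation_of_hasGaussianLaw hlawZ₁.hasGaussianLaw hlawZ₂.hasGaussianLaw hindep
      (by rw [hlawZ₁.variance_eq, hlawZ₂.variance_eq]) ρ s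
  have hZ₁_eq : Z₁ = fun ω => ρ * X₂ ω + s * W ω := by
    funext ω; simp only [hX₂, W]; linear_combination (-Z₁ ω) * hρs
  refine ⟨ae_of_all _ fun ω => mul_eq_hoeffding_decomposition ρ _ _, ?_, ?_,
    integral_hoeffdingMainEffect ρ hlawZ₁, integral_hoeffdingMainEffect ρ hlawX₂⟩
  · rw [hX₂]
    exact condExp_hoeffdingInteraction_eq_zero ρ hZ₁ hZ₂ hlawZ₁.hasGaussianLaw.integrable
      hlawZ₂ hindep hs
  · simp only [hoeffdingInteraction_comm ρ (Z₁ _)]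
    rw [hZ₁_eq]
    exact condExp_hoeffdingInteraction_eq_zero ρ (hX₂ ▸ by fun_prop) (by fun_prop)
      hlawX₂.hasGaussianLaw.integrable hlawW hX₂W hs
end

section
/- Let X be a random vector on [0,1]^p with density f satisfying 0 < c₁ ≤ f ≤ c₂, let J ⊆ {1,...,p}, I ⊊ J, and let A^{(I)} be a measurable subset of [0,1]^{|I|} with positive measure. Let μ be a measurable function of x^{(J)} that is piecewise constant over a finite product partition {A_k × A^{(I)}} refining the conditioning event, with f_ℓ the cell-averaged density and Z the random vector with density f_ℓ. Then E[μ(X^{(J)}) | X^{(I)} ∈ A^{(I)}] = E[μ(Z^{(J)}) | Z^{(I)} ∈ A^{(I)}]. -/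
/-!
On each cell `A k` the function `μf` is a constant `c k` and `fℓ` is the constant `⨍ f`, so
`∫_{A k} μf fℓ = c k ∫_{A k} fℓ = c k ∫_{A k} f = ∫_{A k} μf f`, and likewise without `μf`.
Since `A^{(I)} ∩ [0,1]^p` is a disjoint union of cells, numerator and denominator of the two
conditional expectations agree term by term.
-/

open MeasureTheory Set

theorem Set.exists_eqOn_const_of_forall_eq {α β : Type*} [Nonempty β] {m : α → β} {S : Set α}
    (hm : ∀ x ∈ S, ∀ y ∈ S, m x = m y) : ∃ c, EqOn m (fun _ => c) S := by
  rcases S.eq_empty_or_nonempty with rfl | ⟨x₀, hx₀⟩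
  · exact ⟨Classical.arbitrary β, eqOn_empty _ _⟩
  · exact ⟨m x₀, fun x hx => hm x hx x₀ hx₀⟩

namespace MeasureTheory

variable {α E : Type*} [MeasurableSpace α] {ν : Measure α} {S : Set α}
  [NormedAddCommGroup E] [NormedSpace ℝ E]

theorem integrableOn_of_eqOn_setAverage {f g : α → E} (hS : MeasurableSet S) (hνS : ν S ≠ ⊤)
    (hg : EqOn g (fun _ => ⨍ y in S, f y ∂ν) S) : IntegrableOn g S ν :=
  (integrableOn_const hνS).congr_fun hg.symm hS

theorem setIntegral_eq_of_eqOn_setAverage [CompleteSpace E] {f g : α → E} (hS : MeasurableSet S) (hνS : ν S ≠ ⊤)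
    (hg : EqOn g (fun _ => ⨍ y in S, f y ∂ν) S) : ∫ x in S, g x ∂ν = ∫ x in S, f x ∂ν := by
  rw [setIntegral_congr_fun hS hg, setIntegral_const, measure_smul_setAverage f hνS]

theorem IntegrableOn.mul_of_eqOn_const {m g : α → ℝ} {c : ℝ} (hg : IntegrableOn g S ν)
    (hS : MeasurableSet S) (hm : EqOn m (fun _ => c) S) :
    IntegrableOn (fun x => m x * g x) S ν :=
  IntegrableOn.congr_fun (hg.const_mul c) (fun x hx => by simp only [hm hx]) hS

theorem setIntegral_mul_of_eqOn_const {m g : α → ℝ} {c : ℝ} (hS : MeasurableSet S)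
    (hm : EqOn m (fun _ => c) S) : ∫ x in S, m x * g x ∂ν = c * ∫ x in S, g x ∂ν := by
  rw [← integral_const_mul]
  exact setIntegral_congr_fun hS fun x hx => by simp only [hm hx]

theorem setIntegral_biUnion_finset_congr {ι : Type*} {s : Finset ι} {A : ι → Set α}
    {φ ψ : α → E} (hA : ∀ k ∈ s, MeasurableSet (A k)) (hdisj : PairwiseDisjoint (↑s) A)
    (hφ : ∀ k ∈ s, IntegrableOn φ (A k) ν) (hψ : ∀ k ∈ s, IntegrableOn ψ (A k) ν)
    (heq : ∀ k ∈ s, ∫ x in A k, φ x ∂ν = ∫ x in A k, ψ x ∂ν) :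
    ∫ x in ⋃ k ∈ s, A k, φ x ∂ν = ∫ x in ⋃ k ∈ s, A k, ψ x ∂ν := by
  rw [integral_biUnion_finset s hA hdisj hφ, integral_biUnion_finset s hA hdisj hψ]
  exact Finset.sum_congr rfl heq

end MeasureTheory

theorem stmt11_general (p : ℕ) (f : (Fin p → ℝ) → ℝ)
    (hfint : IntegrableOn f (Set.Icc (0 : Fin p → ℝ) 1) volume)
    (K : ℕ) (A : Fin K → Set (Fin p → ℝ))
    (hAmeas : ∀ k, MeasurableSet (A k))
    (hcover : (⋃ k, A k) = Set.Icc (0 : Fin p → ℝ) 1)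
    (hdisj : Pairwise (Function.onFun Disjoint A))
    (μf : (Fin p → ℝ) → ℝ)
    (hμpc : ∀ k, ∀ x ∈ A k, ∀ y ∈ A k, μf x = μf y)
    (AI : Set (Fin p → ℝ))
    (s : Finset (Fin K)) (hAIcells : AI ∩ Set.Icc (0 : Fin p → ℝ) 1 = ⋃ k ∈ s, A k)
    (fℓ : (Fin p → ℝ) → ℝ)
    (hfℓ : ∀ k, ∀ x ∈ A k, fℓ x = (∫ y in A k, f y) / (volume (A k)).toReal) :
    (∫ x in AI ∩ Set.Icc (0 : Fin p → ℝ) 1, μf x * f x) /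
        (∫ x in AI ∩ Set.Icc (0 : Fin p → ℝ) 1, f x) =
      (∫ x in AI ∩ Set.Icc (0 : Fin p → ℝ) 1, μf x * fℓ x) /
        (∫ x in AI ∩ Set.Icc (0 : Fin p → ℝ) 1, fℓ x) := by
  have hsub (k) : A k ⊆ Icc 0 1 := hcover ▸ subset_iUnion A k
  have hfin (k) : volume (A k) ≠ ⊤ :=
    measure_ne_top_of_subset (hsub k) isCompact_Icc.measure_lt_top.ne
  have hfℓavg (k) : EqOn fℓ (fun _ => ⨍ y in A k, f y) (A k) := fun x hx => by
    rw [hfℓ k x hx, setAverage_eq, smul_eq_mul, div_eq_inv_mul, measureReal_def]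
  choose c hc using fun k => exists_eqOn_const_of_forall_eq (hμpc k)
  have hf (k) : IntegrableOn f (A k) := hfint.mono_set (hsub k)
  have hfℓint (k) : IntegrableOn fℓ (A k) :=
    integrableOn_of_eqOn_setAverage (hAmeas k) (hfin k) (hfℓavg k)
  have hcell (k) : ∫ x in A k, fℓ x = ∫ x in A k, f x :=
    setIntegral_eq_of_eqOn_setAverage (hAmeas k) (hfin k) (hfℓavg k)
  have hdisj' : PairwiseDisjoint (↑s) A := hdisj.set_pairwise _
  rw [hAIcells,
    setIntegral_biUnion_finset_congr (fun k _ => hAmeas k) hdisj'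
      (fun k _ => (hf k).mul_of_eqOn_const (hAmeas k) (hc k))
      (fun k _ => (hfℓint k).mul_of_eqOn_const (hAmeas k) (hc k))
      (fun k _ => by rw [setIntegral_mul_of_eqOn_const (hAmeas k) (hc k),
        setIntegral_mul_of_eqOn_const (hAmeas k) (hc k), hcell]),
    setIntegral_biUnion_finset_congr (fun k _ => hAmeas k) hdisj'
      (fun k _ => hf k) (fun k _ => hfℓint k) (fun k _ => (hcell k).symm)]

/-- Lemma 2 of the paper: for μ piecewise constant over a finite Cartesian
partition of [0,1]^p (depending only on the J-coordinates), a conditioning set A^{(I)}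
(depending only on the I-coordinates, I ⊊ J) that is a union of partition cells, and f_ℓ
the cell-averaged density, the conditional expectations agree:
E[μ(X^{(J)}) | X^{(I)} ∈ A^{(I)}] = E[μ(Z^{(J)}) | Z^{(I)} ∈ A^{(I)}], expressed via the
densities f and f_ℓ of X and Z. -/
theorem stmt11 (p : ℕ) (f : (Fin p → ℝ) → ℝ) (c₁ c₂ : ℝ)
    (hc₁ : 0 < c₁) (hc₁₂ : c₁ ≤ c₂)
    (hfb : ∀ x ∈ Set.Icc (0 : Fin p → ℝ) 1, c₁ ≤ f x ∧ f x ≤ c₂)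
    (hfint : IntegrableOn f (Set.Icc (0 : Fin p → ℝ) 1) volume)
    (I J : Finset (Fin p)) (hIJ : I ⊂ J)
    (K : ℕ) (A : Fin K → Set (Fin p → ℝ))
    (hAmeas : ∀ k, MeasurableSet (A k))
    (hApos : ∀ k, 0 < volume (A k))
    (hcover : (⋃ k, A k) = Set.Icc (0 : Fin p → ℝ) 1)
    (hdisj : Pairwise (Function.onFun Disjoint A))
    (μf : (Fin p → ℝ) → ℝ) (hμmeas : Measurable μf)
    (hμJ : ∀ x y : Fin p → ℝ, (∀ j ∈ J, x j = y j) → μf x = μf y)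
    (hμpc : ∀ k, ∀ x ∈ A k, ∀ y ∈ A k, μf x = μf y)
    (AI : Set (Fin p → ℝ))
    (hAII : ∀ x y : Fin p → ℝ, (∀ i ∈ I, x i = y i) → (x ∈ AI ↔ y ∈ AI))
    (s : Finset (Fin K)) (hAIcells : AI ∩ Set.Icc (0 : Fin p → ℝ) 1 = ⋃ k ∈ s, A k)
    (hs : s.Nonempty)
    (fℓ : (Fin p → ℝ) → ℝ)
    (hfℓ : ∀ k, ∀ x ∈ A k, fℓ x = (∫ y in A k, f y) / (volume (A k)).toReal) :
    (∫ x in AI ∩ Set.Icc (0 : Fin p → ℝ) 1, μf x * f x) /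
        (∫ x in AI ∩ Set.Icc (0 : Fin p → ℝ) 1, f x) =
      (∫ x in AI ∩ Set.Icc (0 : Fin p → ℝ) 1, μf x * fℓ x) /
        (∫ x in AI ∩ Set.Icc (0 : Fin p → ℝ) 1, fℓ x) :=
  stmt11_general p f hfint K A hAmeas hcover hdisj μf hμpc AI s hAIcells fℓ hfℓ
end

section
/- Let X be a random vector and suppose a square-integrable function T of X admits two decompositions T(X) = Σ_{J ⊆ S} ν^{(J)}(X^{(J)}) = Σ_{J ⊆ S} μ^{(J)}(X^{(J)}) over the same finite index family, where both families satisfy the hierarchical orthogonality constraints E[ν^{(J)}(X^{(J)}) | X^{(I)}] = 0 and E[μ^{(J)}(X^{(J)}) | X^{(I)}] = 0 for all I ⊊ J. If the density of X on [0,1]^p is bounded between positive constants, then ν^{(J)}(X^{(J)}) = μ^{(J)}(X^{(J)}) almost surely for every J. -/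
/-!
Subtracting the two decompositions leaves components `d_J = ν_J - μ_J` that sum to zero and are
still hierarchically orthogonal; we show `d_J(X) = 0` by downward induction on `|J|`. Once the
larger components are known to vanish, average every remaining `d_K` over the coordinates outside
`J` with respect to the uniform product measure on the cube. The density bounds make the law of
`X` comparable to that measure, so a.e. identities and square integrability pass between them.
The average of `d_J` is `d_J` itself, while for `K ≠ J` (with `|K| ≤ |J|`) the average depends
only on the coordinates in `J ∩ K ⊊ J` and is therefore orthogonal to `d_J(X)`. Averaging
`∑ d_K = 0` and pairing it with `d_J(X)` gives `E[d_J(X)²] = 0`.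
-/

open MeasureTheory Set
open scoped ENNReal

namespace MeasureTheory

section Piecewise

variable {ι : Type*} [DecidableEq ι] {α : ι → Type*} [∀ i, MeasurableSpace (α i)]

theorem measurable_finset_piecewise (J : Finset ι) :
    Measurable fun q : (Π i, α i) × (Π i, α i) => J.piecewise q.1 q.2 := by
  refine measurable_pi_lambda _ fun i => ?_
  by_cases hi : i ∈ J
  · simpa [hi] using measurable_fst.eval
  · simpa [hi] using measurable_snd.eval

theorem measurePreserving_finset_piecewise [Fintype ι] (μ : ∀ i, Measure (α i))
    [∀ i, IsProbabilityMeasure (μ i)] (J : Finset ι) :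
    MeasurePreserving (fun q : (Π i, α i) × (Π i, α i) => J.piecewise q.1 q.2)
      ((Measure.pi μ).prod (Measure.pi μ)) (Measure.pi μ) := by
  refine ⟨measurable_finset_piecewise J, (Measure.pi_eq fun s hs => ?_).symm⟩
  have hpre : (fun q : (Π i, α i) × (Π i, α i) => J.piecewise q.1 q.2) ⁻¹' univ.pi s =
      univ.pi (J.piecewise s fun _ => univ) ×ˢ univ.pi (J.piecewise (fun _ => univ) s) := by
    ext q
    simp only [mem_preimage, mem_pi, mem_univ, true_implies, mem_prod, ← forall_and]
    refine forall_congr' fun i => ?_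
    by_cases hi : i ∈ J <;> simp [hi]
  rw [Measure.map_apply (measurable_finset_piecewise J) (.univ_pi hs), hpre, Measure.prod_prod,
    Measure.pi_pi, Measure.pi_pi, ← Finset.prod_mul_distrib]
  refine Finset.prod_congr rfl fun i _ => ?_
  by_cases hi : i ∈ J <;> simp [hi]

end Piecewise

theorem MemLp.integral_prod_right {α β : Type*} [MeasurableSpace α] [MeasurableSpace β]
    {μ : Measure α} {ν : Measure β} [SFinite μ] [IsProbabilityMeasure ν] {F : α × β → ℝ}
    (hF : MemLp F 2 (μ.prod ν)) : MemLp (fun x => ∫ y, F (x, y) ∂ν) 2 μ := by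
  have hsq : Integrable (fun q => F q ^ 2) (μ.prod ν) :=
    (memLp_two_iff_integrable_sq hF.1).1 hF
  have hmeas := hF.1.integral_prod_right'
  refine (memLp_two_iff_integrable_sq hmeas).2 <|
    hsq.integral_prod_left.mono' (hmeas.pow 2) ?_
  filter_upwards [hF.1.prodMk_left, hsq.prod_right_ae] with x hFx hsqx
  have hjensen : (∫ y, F (x, y) ∂ν) ^ 2 ≤ ∫ y, F (x, y) ^ 2 ∂ν :=
    even_two.convexOn_pow.map_integral_le (continuous_pow 2).continuousOn isClosed_univ
      (by simp) (((memLp_two_iff_integrable_sq hFx).2 hsqx).integrable one_le_two) hsqx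
  simpa using hjensen

section PartialAverage

variable {ι : Type*} [Fintype ι] [DecidableEq ι] {α : ι → Type*} [∀ i, MeasurableSpace (α i)]
  (μ : ∀ i, Measure (α i))

/-- `E[g | x_J]` under the product measure `Measure.pi μ`. -/
noncomputable def partialAverage (J : Finset ι) (g : (Π i, α i) → ℝ) (x : Π i, α i) : ℝ :=
  ∫ y, g (J.piecewise x y) ∂Measure.pi μ

variable {μ}

theorem DependsOn.partialAverage {g : (Π i, α i) → ℝ} {s : Set ι} (hg : DependsOn g s)
    (J : Finset ι) : DependsOn (partialAverage μ J g) (↑J ∩ s) := by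
  intro x x' hxx'
  refine integral_congr_ae (ae_of_all _ fun y => hg fun i hi => ?_)
  by_cases hiJ : i ∈ J
  · simp [hiJ, hxx' i ⟨hiJ, hi⟩]
  · simp [hiJ]

variable [∀ i, IsProbabilityMeasure (μ i)]

theorem partialAverage_eq_self {g : (Π i, α i) → ℝ} {J : Finset ι} (hg : DependsOn g J) :
    partialAverage μ J g = g := by
  ext x
  have hconst : ∀ y, g (J.piecewise x y) = g x := fun y =>
    hg fun i hi => Finset.piecewise_eq_of_mem _ _ _ hi
  simp only [partialAverage, hconst, integral_const, probReal_univ, one_smul]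

theorem Measurable.stronglyMeasurable_partialAverage {g : (Π i, α i) → ℝ} (hg : Measurable g)
    (J : Finset ι) : StronglyMeasurable (partialAverage μ J g) :=
  (hg.comp (measurable_finset_piecewise J)).stronglyMeasurable.integral_prod_right'

theorem MemLp.partialAverage {g : (Π i, α i) → ℝ} (hg : MemLp g 2 (Measure.pi μ))
    (J : Finset ι) : MemLp (partialAverage μ J g) 2 (Measure.pi μ) :=
  (hg.comp_measurePreserving (measurePreserving_finset_piecewise μ J)).integral_prod_right

theorem partialAverage_congr_ae {g g' : (Π i, α i) → ℝ} (h : g =ᵐ[Measure.pi μ] g')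
    (J : Finset ι) : partialAverage μ J g =ᵐ[Measure.pi μ] partialAverage μ J g' := by
  have hprod := (measurePreserving_finset_piecewise μ J).quasiMeasurePreserving.ae h
  filter_upwards [Measure.ae_ae_of_ae_prod hprod] with x hx
  exact integral_congr_ae hx

theorem partialAverage_finset_sum {κ : Type*} (T : Finset κ) {g : κ → (Π i, α i) → ℝ}
    (hg : ∀ k ∈ T, Integrable (g k) (Measure.pi μ)) (J : Finset ι) :
    partialAverage μ J (fun x => ∑ k ∈ T, g k x) =ᵐ[Measure.pi μ]
      fun x => ∑ k ∈ T, partialAverage μ J (g k) x := by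
  have hφ := measurePreserving_finset_piecewise μ J
  have hslices : ∀ᵐ x ∂Measure.pi μ, ∀ k ∈ T,
      Integrable (fun y => g k (J.piecewise x y)) (Measure.pi μ) :=
    (Filter.eventually_all_finset T).2 fun k hk =>
      (hφ.integrable_comp_of_integrable (hg k hk)).prod_right_ae
  filter_upwards [hslices] with x hx
  exact integral_finsetSum T hx

end PartialAverage

theorem DependsOn.measurable_comp_comap_restrict {Ω ι β : Type*} {α : ι → Type*}
    [∀ i, MeasurableSpace (α i)] [MeasurableSpace β] {g : (Π i, α i) → β} {I : Finset ι}
    [DecidableEq ι] (hdep : DependsOn g I) (hg : Measurable g) (X : Ω → Π i, α i) :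
    Measurable[MeasurableSpace.comap (fun ω (i : I) => X ω i) inferInstance]
      fun ω => g (X ω) := by
  rcases isEmpty_or_nonempty Ω with _ | ⟨⟨ω₀⟩⟩
  · exact @Subsingleton.measurable _ _ _ (_) _ _
  have hfactor : (fun ω => g (X ω)) =
      (fun z => g (Function.updateFinset (X ω₀) I z)) ∘ fun ω (i : I) => X ω i :=
    funext fun ω => hdep fun i hi => by simp [Function.updateFinset, Finset.mem_coe.1 hi]
  rw [hfactor]
  exact (hg.comp measurable_updateFinset).comp (comap_measurable _)

theorem integral_mul_eq_zero_of_condExp_eq_zero {Ω : Type*} {m m₀ : MeasurableSpace Ω}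
    {P : Measure Ω} [IsFiniteMeasure P] (hm : m ≤ m₀) {A B : Ω → ℝ} (hA : MemLp A 2 P)
    (hB : MemLp B 2 P) (hBm : StronglyMeasurable[m] B) (hcond : P[A|m] =ᵐ[P] 0) :
    ∫ ω, A ω * B ω ∂P = 0 := by
  have hcondBA : P[B * A|m] =ᵐ[P] 0 := by
    filter_upwards [condExp_mul_of_stronglyMeasurable_left hBm (hB.integrable_mul hA)
      (hA.integrable one_le_two), hcond] with ω h h0
    simp [h, h0]
  calc ∫ ω, A ω * B ω ∂P = ∫ ω, P[B * A|m] ω ∂P := by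
        rw [integral_condExp hm]; simp only [Pi.mul_apply, mul_comm]
    _ = 0 := by simp [integral_congr_ae hcondBA]

theorem ae_iff_ae_comp_of_absolutelyContinuous {Ω β : Type*} [MeasurableSpace Ω]
    [MeasurableSpace β] {P : Measure Ω} {ρ : Measure β} {X : Ω → β} (hX : AEMeasurable X P)
    (h₁ : P.map X ≪ ρ) (h₂ : ρ ≪ P.map X) {q : β → Prop} (hq : MeasurableSet {x | q x}) :
    (∀ᵐ x ∂ρ, q x) ↔ ∀ᵐ ω ∂P, q (X ω) := by
  rw [← ae_map_iff hX hq]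
  exact ⟨fun h => h₁.ae_le h, fun h => h₂.ae_le h⟩

theorem withDensity_le_smul_restrict {β : Type*} [MeasurableSpace β] {ν : Measure β}
    {s : Set β} (hs : MeasurableSet s) {g : β → ℝ≥0∞} {c : ℝ≥0∞} (hgc : ∀ x ∈ s, g x ≤ c)
    (hg0 : ∀ x ∉ s, g x = 0) : ν.withDensity g ≤ c • ν.restrict s := by
  rw [← withDensity_indicator_one hs, ← withDensity_smul _ (measurable_one.indicator hs)]
  refine withDensity_mono (ae_of_all _ fun x => ?_)
  by_cases hx : x ∈ s
  · simpa [hx] using hgc x hx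
  · simp [hx, hg0 x hx]

theorem restrict_le_inv_smul_withDensity {β : Type*} [MeasurableSpace β] {ν : Measure β}
    {s : Set β} (hs : MeasurableSet s) {g : β → ℝ≥0∞} {c : ℝ≥0∞} (hc0 : c ≠ 0) (hc : c ≠ ∞)
    (hcg : ∀ x ∈ s, c ≤ g x) : ν.restrict s ≤ c⁻¹ • ν.withDensity g := by
  rw [← withDensity_indicator_one hs, ← withDensity_smul' _ _ (ENNReal.inv_ne_top.2 hc0)]
  refine withDensity_mono (ae_of_all _ fun x => ?_)
  by_cases hx : x ∈ s
  · calc s.indicator 1 x = c⁻¹ * c := by simp [hx, ENNReal.inv_mul_cancel hc0 hc]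
      _ ≤ c⁻¹ * g x := by gcongr; exact hcg x hx
  · simp [hx]

theorem volume_restrict_Icc_eq_pi {ι : Type*} [Fintype ι] (a b : ι → ℝ) :
    volume.restrict (Icc a b) = Measure.pi fun i => volume.restrict (Icc (a i) (b i)) := by
  rw [← Measure.restrict_pi_pi, ← volume_pi, ← Set.pi_univ_Icc]

section Uniqueness

variable {Ω ι : Type*} [MeasurableSpace Ω] {P : Measure Ω}
  [Fintype ι] [DecidableEq ι] {α : ι → Type*} [∀ i, MeasurableSpace (α i)]
  {μ : ∀ i, Measure (α i)} [∀ i, IsProbabilityMeasure (μ i)] {X : Ω → Π i, α i}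
  {a b : ℝ≥0∞} {d : Finset ι → (Π i, α i) → ℝ} {U : Finset (Finset ι)}

theorem memLp_partialAverage_comp (hX : Measurable X) (ha : a ≠ ∞)
    (hupper : P.map X ≤ a • Measure.pi μ) {g : (Π i, α i) → ℝ} (hg : Measurable g)
    (hgL2 : MemLp g 2 (Measure.pi μ)) (J : Finset ι) :
    MemLp (fun ω => partialAverage μ J g (X ω)) 2 P :=
  (memLp_map_measure_iff (hg.stronglyMeasurable_partialAverage J).aestronglyMeasurable
    hX.aemeasurable).1 ((hgL2.partialAverage J).of_measure_le_smul ha hupper)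

theorem integral_mul_partialAverage_comp_eq_zero [IsFiniteMeasure P] (hX : Measurable X)
    (ha : a ≠ ∞) (hupper : P.map X ≤ a • Measure.pi μ) {J K : Finset ι} (hJK : ¬ J ⊆ K) {A : Ω → ℝ}
    (hA : MemLp A 2 P)
    (horth : ∀ I : Finset ι, I ⊂ J →
      P[A | MeasurableSpace.comap (fun ω (i : I) => X ω i) inferInstance] =ᵐ[P] 0)
    {g : (Π i, α i) → ℝ} (hg : Measurable g) (hgL2 : MemLp g 2 (Measure.pi μ))
    (hdep : DependsOn g K) :
    ∫ ω, A ω * partialAverage μ J g (X ω) ∂P = 0 := by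
  have hIJ : J ∩ K ⊂ J := Finset.ssubset_iff_subset_ne.2
    ⟨Finset.inter_subset_left, fun h => hJK (h ▸ Finset.inter_subset_right)⟩
  have hdepI : DependsOn (partialAverage μ J g) ↑(J ∩ K) := by
    simpa only [Finset.coe_inter] using hdep.partialAverage J
  have hm : MeasurableSpace.comap (fun ω (i : ↥(J ∩ K)) => X ω i) inferInstance ≤ ‹_› :=
    (measurable_pi_lambda _ fun i => hX.eval).comap_le
  exact integral_mul_eq_zero_of_condExp_eq_zero hm hA
    (memLp_partialAverage_comp hX ha hupper hg hgL2 J)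
    (hdepI.measurable_comp_comap_restrict (hg.stronglyMeasurable_partialAverage J).measurable
      X).stronglyMeasurable (horth _ hIJ)

theorem ae_sum_partialAverage_comp_eq_zero (hX : Measurable X)
    (hupper : P.map X ≤ a • Measure.pi μ) (hlower : Measure.pi μ ≤ b • P.map X)
    (hdm : ∀ K ∈ U, Measurable (d K)) (hdint : ∀ K ∈ U, Integrable (d K) (Measure.pi μ))
    (hsum : ∀ᵐ ω ∂P, ∑ K ∈ U, d K (X ω) = 0) (J : Finset ι) :
    ∀ᵐ ω ∂P, ∑ K ∈ U, partialAverage μ J (d K) (X ω) = 0 := by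
  have htransfer {q : (Π i, α i) → Prop} (hq : MeasurableSet {x | q x}) :=
    ae_iff_ae_comp_of_absolutelyContinuous hX.aemeasurable
      (Measure.absolutelyContinuous_of_le_smul hupper)
      (Measure.absolutelyContinuous_of_le_smul hlower) hq
  have hsum' : (fun x => ∑ K ∈ U, d K x) =ᵐ[Measure.pi μ] 0 :=
    (htransfer (measurableSet_eq_fun (Finset.measurable_sum U hdm) measurable_const)).2 hsum
  have havg : (fun x => ∑ K ∈ U, partialAverage μ J (d K) x) =ᵐ[Measure.pi μ] 0 :=
    (partialAverage_finset_sum U hdint J).symm.trans <|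
      (partialAverage_congr_ae hsum' J).trans (ae_of_all _ fun x => integral_zero _ _)
  refine (htransfer (measurableSet_eq_fun ?_ measurable_const)).1 havg
  exact Finset.measurable_sum U fun K hK =>
    ((hdm K hK).stronglyMeasurable_partialAverage J).measurable

theorem ae_eq_zero_of_sum_eq_zero_of_forall_not_subset [IsFiniteMeasure P]
    (hX : Measurable X) (ha : a ≠ ∞) (hb : b ≠ ∞) (hupper : P.map X ≤ a • Measure.pi μ)
    (hlower : Measure.pi μ ≤ b • P.map X) (hdm : ∀ K ∈ U, Measurable (d K))
    (hdL2 : ∀ K ∈ U, MemLp (fun ω => d K (X ω)) 2 P) (hdep : ∀ K ∈ U, DependsOn (d K) K)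
    (hsum : ∀ᵐ ω ∂P, ∑ K ∈ U, d K (X ω) = 0) {J : Finset ι} (hJ : J ∈ U)
    (hmax : ∀ K ∈ U, K ≠ J → ¬ J ⊆ K)
    (horth : ∀ I : Finset ι, I ⊂ J →
      P[fun ω => d J (X ω) | MeasurableSpace.comap (fun ω (i : I) => X ω i) inferInstance]
        =ᵐ[P] 0) :
    (fun ω => d J (X ω)) =ᵐ[P] 0 := by
  have hdL2' : ∀ K ∈ U, MemLp (d K) 2 (Measure.pi μ) := fun K hK =>
    ((memLp_map_measure_iff (hdm K hK).aestronglyMeasurable hX.aemeasurable).2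
      (hdL2 K hK)).of_measure_le_smul hb hlower
  have hpair : ∀ K ∈ U, ∫ ω, d J (X ω) * partialAverage μ J (d K) (X ω) ∂P =
      if K = J then ∫ ω, d J (X ω) ^ 2 ∂P else 0 := by
    intro K hK
    split_ifs with hKJ
    · subst hKJ
      simp [partialAverage_eq_self (hdep K hK), sq]
    · exact integral_mul_partialAverage_comp_eq_zero hX ha hupper (hmax K hK hKJ) (hdL2 J hJ)
        horth (hdm K hK) (hdL2' K hK) (hdep K hK)
  have hsq : ∫ ω, d J (X ω) ^ 2 ∂P = 0 := by
    calc ∫ ω, d J (X ω) ^ 2 ∂P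
        = ∑ K ∈ U, ∫ ω, d J (X ω) * partialAverage μ J (d K) (X ω) ∂P := by
          simp [Finset.sum_congr rfl hpair, hJ]
      _ = ∫ ω, d J (X ω) * ∑ K ∈ U, partialAverage μ J (d K) (X ω) ∂P := by
          simp_rw [Finset.mul_sum]
          refine (integral_finsetSum U fun K hK => ?_).symm
          exact (hdL2 J hJ).integrable_mul
            (memLp_partialAverage_comp hX ha hupper (hdm K hK) (hdL2' K hK) J)
      _ = 0 := by
          refine integral_eq_zero_of_ae ?_
          filter_upwards [ae_sum_partialAverage_comp_eq_zero hX hupper hlower hdm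
            (fun K hK => (hdL2' K hK).integrable one_le_two) hsum J] with ω hω
          simp [hω]
  have hsq_ae := (integral_eq_zero_iff_of_nonneg (fun ω => sq_nonneg (d J (X ω)))
    (hdL2 J hJ).integrable_sq).1 hsq
  filter_upwards [hsq_ae] with ω hω
  exact pow_eq_zero_iff two_ne_zero |>.1 hω

theorem ae_eq_zero_of_sum_eq_zero [IsFiniteMeasure P] (hX : Measurable X) (ha : a ≠ ∞)
    (hb : b ≠ ∞) (hupper : P.map X ≤ a • Measure.pi μ) (hlower : Measure.pi μ ≤ b • P.map X)
    (hdm : ∀ K ∈ U, Measurable (d K))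
    (hdL2 : ∀ K ∈ U, MemLp (fun ω => d K (X ω)) 2 P) (hdep : ∀ K ∈ U, DependsOn (d K) K)
    (hsum : ∀ᵐ ω ∂P, ∑ K ∈ U, d K (X ω) = 0)
    (horth : ∀ J ∈ U, ∀ I : Finset ι, I ⊂ J →
      P[fun ω => d J (X ω) | MeasurableSpace.comap (fun ω (i : I) => X ω i) inferInstance]
        =ᵐ[P] 0) :
    ∀ J ∈ U, (fun ω => d J (X ω)) =ᵐ[P] 0 := by
  intro J hJ
  induction hn : Fintype.card ι - J.card using Nat.strong_induction_on generalizing J with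
  | _ n ih =>
    set V := U.filter fun K => K.card ≤ J.card
    have hlarge : ∀ᵐ ω ∂P, ∀ K ∈ U.filter fun K => ¬ K.card ≤ J.card, d K (X ω) = 0 := by
      refine (Filter.eventually_all_finset _).2 fun K hK => ?_
      obtain ⟨hKU, hKJ⟩ := Finset.mem_filter.1 hK
      have hKcard : K.card ≤ Fintype.card ι := Finset.card_le_univ K
      exact ih _ (by omega) K hKU rfl
    have hsumV : ∀ᵐ ω ∂P, ∑ K ∈ V, d K (X ω) = 0 := by
      filter_upwards [hsum, hlarge] with ω hω hω'
      rwa [← Finset.sum_filter_add_sum_filter_not U (fun K => K.card ≤ J.card),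
        Finset.sum_eq_zero hω', add_zero] at hω
    have hmax : ∀ K ∈ V, K ≠ J → ¬ J ⊆ K := fun K hK hKJ hJK =>
      hKJ (Finset.eq_of_subset_of_card_le hJK (Finset.mem_filter.1 hK).2).symm
    have hVU : ∀ K ∈ V, K ∈ U := fun K hK => (Finset.mem_filter.1 hK).1
    exact ae_eq_zero_of_sum_eq_zero_of_forall_not_subset hX ha hb hupper hlower
      (fun K hK => hdm K (hVU K hK)) (fun K hK => hdL2 K (hVU K hK))
      (fun K hK => hdep K (hVU K hK)) hsumV (Finset.mem_filter.2 ⟨hJ, le_rfl⟩) hmax (horth J hJ)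

end Uniqueness

end MeasureTheory

theorem stmt15_general {Ω : Type*} [MeasurableSpace Ω] (P : Measure Ω) [IsProbabilityMeasure P]
    (p : ℕ) (X : Ω → (Fin p → ℝ)) (hX : Measurable X)
    (f : (Fin p → ℝ) → ℝ) (c₁ c₂ : ℝ) (hc₁ : 0 < c₁)
    (hdens : Measure.map X P = volume.withDensity (fun x => ENNReal.ofReal (f x)))
    (hfb : ∀ x ∈ Set.Icc (0 : Fin p → ℝ) 1, c₁ ≤ f x ∧ f x ≤ c₂)
    (hfout : ∀ x ∉ Set.Icc (0 : Fin p → ℝ) 1, f x = 0)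
    (S : Finset (Fin p))
    (ν μ : Finset (Fin p) → (Fin p → ℝ) → ℝ)
    (hνm : ∀ J, Measurable (ν J)) (hμm : ∀ J, Measurable (μ J))
    (hνL2 : ∀ J, MemLp (fun ω => ν J (X ω)) 2 P)
    (hμL2 : ∀ J, MemLp (fun ω => μ J (X ω)) 2 P)
    (hνdep : ∀ J ∈ S.powerset, ∀ x y : Fin p → ℝ, (∀ i ∈ J, x i = y i) → ν J x = ν J y)
    (hμdep : ∀ J ∈ S.powerset, ∀ x y : Fin p → ℝ, (∀ i ∈ J, x i = y i) → μ J x = μ J y)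
    (hdecomp : ∀ᵐ ω ∂P,
      ∑ J ∈ S.powerset, ν J (X ω) = ∑ J ∈ S.powerset, μ J (X ω))
    (hνorth : ∀ J ∈ S.powerset, ∀ I : Finset (Fin p), I ⊂ J →
      P[(fun ω => ν J (X ω)) |
        MeasurableSpace.comap (fun ω (i : I) => X ω i) inferInstance] =ᵐ[P] 0)
    (hμorth : ∀ J ∈ S.powerset, ∀ I : Finset (Fin p), I ⊂ J →
      P[(fun ω => μ J (X ω)) |
        MeasurableSpace.comap (fun ω (i : I) => X ω i) inferInstance] =ᵐ[P] 0) :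
    ∀ J ∈ S.powerset, (fun ω => ν J (X ω)) =ᵐ[P] (fun ω => μ J (X ω)) := by
  have : IsProbabilityMeasure (volume.restrict (Icc (0 : ℝ) 1)) := ⟨by simp⟩
  have hcube : (volume : Measure (Fin p → ℝ)).restrict (Icc 0 1) =
      Measure.pi fun _ => volume.restrict (Icc (0 : ℝ) 1) := volume_restrict_Icc_eq_pi 0 1
  have hupper : P.map X ≤ ENNReal.ofReal c₂ • Measure.pi fun _ => volume.restrict (Icc 0 1) := by
    rw [hdens, ← hcube]
    exact withDensity_le_smul_restrict measurableSet_Icc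
      (fun x hx => ENNReal.ofReal_le_ofReal (hfb x hx).2) (fun x hx => by simp [hfout x hx])
  have hlower : (Measure.pi fun _ => volume.restrict (Icc 0 1)) ≤
      (ENNReal.ofReal c₁)⁻¹ • P.map X := by
    rw [hdens, ← hcube]
    exact restrict_le_inv_smul_withDensity measurableSet_Icc (ENNReal.ofReal_pos.2 hc₁).ne'
      ENNReal.ofReal_ne_top fun x hx => ENNReal.ofReal_le_ofReal (hfb x hx).1
  have horth : ∀ J ∈ S.powerset, ∀ I : Finset (Fin p), I ⊂ J →
      P[fun ω => ν J (X ω) - μ J (X ω) |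
        MeasurableSpace.comap (fun ω (i : I) => X ω i) inferInstance] =ᵐ[P] 0 :=
    fun J hJ I hIJ => (condExp_sub ((hνL2 J).integrable one_le_two)
      ((hμL2 J).integrable one_le_two) _).trans <|
      ((hνorth J hJ I hIJ).sub (hμorth J hJ I hIJ)).trans (by simp)
  intro J hJ
  filter_upwards [ae_eq_zero_of_sum_eq_zero hX ENNReal.ofReal_ne_top
    (ENNReal.inv_ne_top.2 (ENNReal.ofReal_pos.2 hc₁).ne') hupper hlower
    (d := fun K x => ν K x - μ K x) (fun K _ => (hνm K).sub (hμm K))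
    (fun K _ => (hνL2 K).sub (hμL2 K))
    (fun K hK x y hxy => by simp only [hνdep K hK x y hxy, hμdep K hK x y hxy])
    (by simpa [Finset.sum_sub_distrib, sub_eq_zero] using hdecomp) horth J hJ] with ω hω
  exact sub_eq_zero.1 hω

/-- uniqueness of the generalized Hoeffding decomposition: two decompositions
of the same function into hierarchically orthogonal square-integrable components (indexed by
the subsets of S) coincide almost surely, when X has a density on [0,1]^p bounded between
positive constants. -/
theorem stmt15 {Ω : Type*} [MeasurableSpace Ω] (P : Measure Ω) [IsProbabilityMeasure P]
    (p : ℕ) (X : Ω → (Fin p → ℝ)) (hX : Measurable X)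
    (f : (Fin p → ℝ) → ℝ) (c₁ c₂ : ℝ) (hc₁ : 0 < c₁) (hc₁₂ : c₁ ≤ c₂)
    (hdens : Measure.map X P = volume.withDensity (fun x => ENNReal.ofReal (f x)))
    (hfb : ∀ x ∈ Set.Icc (0 : Fin p → ℝ) 1, c₁ ≤ f x ∧ f x ≤ c₂)
    (hfout : ∀ x ∉ Set.Icc (0 : Fin p → ℝ) 1, f x = 0)
    (S : Finset (Fin p))
    (ν μ : Finset (Fin p) → (Fin p → ℝ) → ℝ)
    (hνm : ∀ J, Measurable (ν J)) (hμm : ∀ J, Measurable (μ J))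
    (hνL2 : ∀ J, MemLp (fun ω => ν J (X ω)) 2 P)
    (hμL2 : ∀ J, MemLp (fun ω => μ J (X ω)) 2 P)
    (hνdep : ∀ J ∈ S.powerset, ∀ x y : Fin p → ℝ, (∀ i ∈ J, x i = y i) → ν J x = ν J y)
    (hμdep : ∀ J ∈ S.powerset, ∀ x y : Fin p → ℝ, (∀ i ∈ J, x i = y i) → μ J x = μ J y)
    (hdecomp : ∀ᵐ ω ∂P,
      ∑ J ∈ S.powerset, ν J (X ω) = ∑ J ∈ S.powerset, μ J (X ω))
    (hνorth : ∀ J ∈ S.powerset, ∀ I : Finset (Fin p), I ⊂ J →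
      P[(fun ω => ν J (X ω)) |
        MeasurableSpace.comap (fun ω (i : I) => X ω i) inferInstance] =ᵐ[P] 0)
    (hμorth : ∀ J ∈ S.powerset, ∀ I : Finset (Fin p), I ⊂ J →
      P[(fun ω => μ J (X ω)) |
        MeasurableSpace.comap (fun ω (i : I) => X ω i) inferInstance] =ᵐ[P] 0) :
    ∀ J ∈ S.powerset, (fun ω => ν J (X ω)) =ᵐ[P] (fun ω => μ J (X ω)) :=
  stmt15_general P p X hX f c₁ c₂ hc₁ hdens hfb hfout S ν μ hνm hμm hνL2 hμL2 hνdep hμdep hdecomp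
    hνorth hμorth
end

section
/- Let T: [0,1]^p → ℝ be piecewise constant over a finite product partition A = ⊗_{j=1}^p A^{(j)} of [0,1]^p (where each A^{(j)} is a finite interval partition of [0,1]). Suppose T(x) = g(x^{(I)}) + h(x^{(I')}) for some index sets I, I' ⊆ {1,...,p} and arbitrary functions g, h. Then there exist functions g̃, h̃ that are piecewise constant over the induced product partitions on the I- and I'-coordinates respectively, such that T(x) = g̃(x^{(I)}) + h̃(x^{(I')}) for all x ∈ [0,1]^p. -/
open Classical in
noncomputable def rep19 {p : ℕ} {K : Fin p → ℕ} (A : (j : Fin p) → Fin (K j) → Set ℝ)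
    (j : Fin p) (k : Fin (K j)) : ℝ :=
  if hne : (A j k).Nonempty then hne.choose else 0

open Classical in
noncomputable def rho19 {p : ℕ} {K : Fin p → ℕ} (A : (j : Fin p) → Fin (K j) → Set ℝ)
    (j : Fin p) (t : ℝ) : ℝ :=
  if ht : ∃ k, t ∈ A j k then rep19 A j ht.choose else t

lemma rep19_mem {p : ℕ} {K : Fin p → ℕ} (A : (j : Fin p) → Fin (K j) → Set ℝ)
    {j : Fin p} {k : Fin (K j)} (h : (A j k).Nonempty) : rep19 A j k ∈ A j k := by
  rw [rep19, dif_pos h]; exact h.choose_spec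

lemma rho19_eq {p : ℕ} {K : Fin p → ℕ} (A : (j : Fin p) → Fin (K j) → Set ℝ)
    (hdisj : ∀ j, Pairwise (Function.onFun Disjoint (A j)))
    {j : Fin p} {k : Fin (K j)} {t : ℝ} (ht : t ∈ A j k) :
    rho19 A j t = rep19 A j k := by
  have hex : ∃ k', t ∈ A j k' := ⟨k, ht⟩
  rw [rho19, dif_pos hex]
  congr 1
  by_contra hne
  exact ((hdisj j hne).le_bot ⟨hex.choose_spec, ht⟩ : (t : ℝ) ∈ (⊥ : Set ℝ)).elim

/-- if T is piecewise constant over a finite Cartesian product partition of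
[0,1]^p and T(x) = g(x^{(I)}) + h(x^{(I')}), then there exist g̃, h̃, piecewise constant
over the induced product partitions on the I- and I'-coordinates respectively, with
T(x) = g̃(x^{(I)}) + h̃(x^{(I')}) on [0,1]^p. -/
theorem stmt19 (p : ℕ) (K : Fin p → ℕ) (A : (j : Fin p) → Fin (K j) → Set ℝ)
    (hcover : ∀ j, (⋃ k, A j k) = Set.Icc (0 : ℝ) 1)
    (hdisj : ∀ j, Pairwise (Function.onFun Disjoint (A j)))
    (hinterval : ∀ j k, (A j k).OrdConnected)
    (T : (Fin p → ℝ) → ℝ)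
    (hTpc : ∀ (k : ∀ j, Fin (K j)) (x y : Fin p → ℝ),
      (∀ j, x j ∈ A j (k j)) → (∀ j, y j ∈ A j (k j)) → T x = T y)
    (I I' : Finset (Fin p)) (g h : (Fin p → ℝ) → ℝ)
    (hgdep : ∀ x y : Fin p → ℝ, (∀ j ∈ I, x j = y j) → g x = g y)
    (hhdep : ∀ x y : Fin p → ℝ, (∀ j ∈ I', x j = y j) → h x = h y)
    (hdecomp : ∀ x ∈ Set.Icc (0 : Fin p → ℝ) 1, T x = g x + h x) :
    ∃ g' h' : (Fin p → ℝ) → ℝ,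
      (∀ x y : Fin p → ℝ, (∀ j ∈ I, x j = y j) → g' x = g' y) ∧
      (∀ x y : Fin p → ℝ, (∀ j ∈ I', x j = y j) → h' x = h' y) ∧
      (∀ (k : ∀ j, Fin (K j)) (x y : Fin p → ℝ),
        (∀ j ∈ I, x j ∈ A j (k j)) → (∀ j ∈ I, y j ∈ A j (k j)) → g' x = g' y) ∧
      (∀ (k : ∀ j, Fin (K j)) (x y : Fin p → ℝ),
        (∀ j ∈ I', x j ∈ A j (k j)) → (∀ j ∈ I', y j ∈ A j (k j)) → h' x = h' y) ∧
      (∀ x ∈ Set.Icc (0 : Fin p → ℝ) 1, T x = g' x + h' x) := by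
  classical
  -- cell membership from the cover
  have hmem : ∀ (j : Fin p) (t : ℝ), t ∈ Set.Icc (0:ℝ) 1 → ∃ k, t ∈ A j k := by
    intro j t ht
    have := (hcover j) ▸ ht
    simpa using this
  have hsub : ∀ (j : Fin p) (k : Fin (K j)), A j k ⊆ Set.Icc (0:ℝ) 1 := by
    intro j k t ht
    rw [← hcover j]
    exact Set.mem_iUnion.2 ⟨k, ht⟩
  refine ⟨fun x => g (fun j => if j ∈ I then rho19 A j (x j) else 0),
          fun x => h (fun j => if j ∈ I' then rho19 A j (x j) else 0), ?_, ?_, ?_, ?_, ?_⟩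
  · intro x y hxy
    apply hgdep
    intro j hj
    simp [hj, hxy j hj]
  · intro x y hxy
    apply hhdep
    intro j hj
    simp [hj, hxy j hj]
  · intro k x y hx hy
    apply hgdep
    intro j hj
    simp only [if_pos hj]
    rw [rho19_eq A hdisj (hx j hj), rho19_eq A hdisj (hy j hj)]
  · intro k x y hx hy
    apply hhdep
    intro j hj
    simp only [if_pos hj]
    rw [rho19_eq A hdisj (hx j hj), rho19_eq A hdisj (hy j hj)]
  · intro x hx
    have hx' : ∀ j, x j ∈ Set.Icc (0:ℝ) 1 := fun j => ⟨hx.1 j, hx.2 j⟩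
    choose k hk using fun j => hmem j (x j) (hx' j)
    set z : Fin p → ℝ := fun j => rho19 A j (x j) with hz
    have hzk : ∀ j, z j ∈ A j (k j) := by
      intro j
      rw [hz]
      simp only
      rw [rho19_eq A hdisj (hk j)]
      exact rep19_mem A ⟨x j, hk j⟩
    have hzIcc : z ∈ Set.Icc (0 : Fin p → ℝ) 1 := by
      constructor <;> intro j
      · exact (hsub j (k j) (hzk j)).1
      · exact (hsub j (k j) (hzk j)).2
    have h1 : T x = T z := hTpc k x z hk hzk
    have h2 : T z = g z + h z := hdecomp z hzIcc
    have h3 : g z = g (fun j => if j ∈ I then rho19 A j (x j) else 0) := by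
      apply hgdep; intro j hj; simp [hz, hj]
    have h4 : h z = h (fun j => if j ∈ I' then rho19 A j (x j) else 0) := by
      apply hhdep; intro j hj; simp [hz, hj]
    rw [h1, h2, h3, h4]
end
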